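/- Let l ∈ ℕ with l ≥ 2, let (S_i,+) for i = 1,…,l be countable adequate commutative partial semigroups, and for each i let ⟨x_{i,n}⟩_{n=1}^∞ be an adequate sequence in S_i. Let m, r ∈ ℕ and suppose S_1 × S_2 × … × S_l = D_1 ∪ D_2 ∪ … ∪ D_r. Then there exists j ∈ {1,…,r} such that for each i ∈ {1,…,l−1} there is a product subsystem ⟨y_{i,n}⟩_{n=1}^m of FS(⟨x_{i,n}⟩_{n=1}^∞), and there is an infinite product subsystem ⟨y_{l,n}⟩_{n=1}^∞ of FS(⟨x_{l,n}⟩_{n=1}^∞), such that (×_{i=1}^{l−1} FS(⟨y_{i,n}⟩_{n=1}^m)) × FS(⟨y_{l,n}⟩_{n=1}^∞) ⊆ D_j. -/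

import Mathlib

/-!
Each coordinate `i` carries an ultrafilter `V i` every member of which contains `FS(y)` for an
infinite product subsystem `y` of `x i`. It is the image, under "block ↦ sum of `x` over the
block", of an idempotent ultrafilter on the semigroup of increasing finite index blocks that
lives on the finite unions of singletons; Hindman's theorem in that semigroup yields a sequence of
increasing blocks all of whose unions land in the given set, and by associativity the sum over a
union of blocks is the sum of the block sums.

Some cell `D j` belongs to the iterated product `V 0 ⊗ ⋯ ⊗ V (l-1)`. Unwinding that product from
the outside, at each of the first `l - 1` coordinates the chosen set `FS(⟨y_n⟩_{n<m})` is finite,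
so the corresponding sections can be intersected; the innermost coordinate needs only one
section, and there the whole infinite `FS(y)` survives.
-/

namespace PS

variable {S : Type*}

/-- Left-to-right sum of a list in a partial semigroup (`none` on the empty list). -/
def listSum (P : S → S → Option S) : List S → Option S
  | [] => none
  | [a] => some a
  | a :: b :: l => (listSum P (b :: l)).bind fun t => P a t

/-- The partial sum `∑_{t ∈ H} y t`, taken in increasing order of the indices. -/
def fsum (P : S → S → Option S) (y : ℕ → S) (H : Finset ℕ) : Option S :=
  listSum P ((H.sort (· ≤ ·)).map y)

/-- Associativity of a partial operation, in the strong (Kleene) sense. -/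
def Assoc (P : S → S → Option S) : Prop :=
  ∀ a b c : S, (P a b).bind (fun t => P t c) = (P b c).bind fun t => P a t

/-- Commutativity: `a + b = b + a` whenever either side is defined. -/
def Comm (P : S → S → Option S) : Prop := ∀ a b : S, P a b = P b a

/-- `φ(s) = {t : s + t is defined}`. -/
def phi (P : S → S → Option S) (s : S) : Set S := {t | (P s t).isSome}

/-- `σ(H) = ⋂_{s ∈ H} φ(s)`. -/
def sigma (P : S → S → Option S) (H : Finset S) : Set S :=
  {t | ∀ s ∈ H, (P s t).isSome = true}

/-- An adequate partial semigroup: `σ(H) ≠ ∅` for all finite nonempty `H`. -/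
def Adequate (P : S → S → Option S) : Prop :=
  ∀ H : Finset S, H.Nonempty → (sigma P H).Nonempty

/-- `FS(⟨x_n⟩_{n=m}^∞)`. -/
def FSfrom (P : S → S → Option S) (x : ℕ → S) (m : ℕ) : Set S :=
  {s | ∃ H : Finset ℕ, H.Nonempty ∧ (∀ n ∈ H, m ≤ n) ∧ fsum P x H = some s}

/-- `FS` of the first `m` terms of a sequence. -/
def FSfin (P : S → S → Option S) (x : ℕ → S) (m : ℕ) : Set S :=
  {s | ∃ H : Finset ℕ, H.Nonempty ∧ H ⊆ Finset.range m ∧ fsum P x H = some s}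

/-- An adequate sequence. -/
def AdequateSeq (P : S → S → Option S) (x : ℕ → S) : Prop :=
  (∀ F : Finset ℕ, F.Nonempty → (fsum P x F).isSome = true) ∧
  (∀ F : Finset S, F.Nonempty → ∃ m : ℕ, FSfrom P x m ⊆ sigma P F)

/-- `δS ⊆ βS`. -/
def deltaS (P : S → S → Option S) : Set (Ultrafilter S) :=
  {p | ∀ s : S, phi P s ∈ p}

/-- `-x + A = {y ∈ φ(x) : x + y ∈ A}`. -/
def shift (P : S → S → Option S) (x : S) (A : Set S) : Set S :=
  {y | ∃ z ∈ A, P x y = some z}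

/-- `IsSum P r p q` expresses that `r = p + q` in `δS`:
`A ∈ p + q` iff `{x : -x + A ∈ q} ∈ p`. -/
def IsSum (P : S → S → Option S) (r p q : Ultrafilter S) : Prop :=
  ∀ A : Set S, A ∈ r ↔ {x : S | shift P x A ∈ q} ∈ p

/-- A finite product subsystem `⟨y_n⟩_{n<m}` of `FS(⟨x_n⟩_{n=k}^∞)`. -/
def IsProdSubsysFin (P : S → S → Option S) (x : ℕ → S) (k m : ℕ) (y : ℕ → S) : Prop :=
  ∃ H : ℕ → Finset ℕ,
    (∀ n < m, (H n).Nonempty) ∧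
    (∀ t ∈ H 0, k ≤ t) ∧
    (∀ n, n + 1 < m → ∀ s ∈ H n, ∀ t ∈ H (n + 1), s < t) ∧
    (∀ n < m, fsum P x (H n) = some (y n))

/-- An infinite product subsystem `⟨y_n⟩_{n=0}^∞` of `FS(⟨x_n⟩_{n=k}^∞)`. -/
def IsProdSubsysInf (P : S → S → Option S) (x : ℕ → S) (k : ℕ) (y : ℕ → S) : Prop :=
  ∃ H : ℕ → Finset ℕ,
    (∀ n, (H n).Nonempty) ∧
    (∀ t ∈ H 0, k ≤ t) ∧
    (∀ n, ∀ s ∈ H n, ∀ t ∈ H (n + 1), s < t) ∧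
    (∀ n, fsum P x (H n) = some (y n))

/-- `⟨x_n⟩_{n<m}` is a weak product subsystem of `⟨y_n⟩_{n=k}^∞`, witnessed by `H`. -/
def IsWPSWith (P : S → S → Option S) (y : ℕ → S) (k m : ℕ) (x : ℕ → S)
    (H : ℕ → Finset ℕ) : Prop :=
  (∀ n < m, (H n).Nonempty) ∧
  (∀ n < m, ∀ t ∈ H n, k ≤ t) ∧
  (∀ n₁ < m, ∀ n₂ < m, n₁ ≠ n₂ → Disjoint (H n₁) (H n₂)) ∧
  (∀ n < m, fsum P y (H n) = some (x n))

/-- `⟨x_n⟩_{n<m}` is a weak product subsystem of `⟨y_n⟩_{n=k}^∞`. -/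
def IsWPS (P : S → S → Option S) (y : ℕ → S) (k m : ℕ) (x : ℕ → S) : Prop :=
  ∃ H : ℕ → Finset ℕ, IsWPSWith P y k m x H

/-- The coordinatewise partial operation on a finite product, defined exactly when
every coordinate operation is defined. -/
def prodOp {l : ℕ} {T : Fin l → Type*} (P : ∀ i, T i → T i → Option (T i)) :
    (∀ i, T i) → (∀ i, T i) → Option (∀ i, T i) := fun a b =>
  if h : ∀ i, (P i (a i) (b i)).isSome then
    some fun i => (P i (a i) (b i)).get (h i)
  else none

end PS

lemma blockSeq_precedes_of_lt {H : ℕ → Finset ℕ} (hne : ∀ n, (H n).Nonempty)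
    (hH : ∀ n, ∀ s ∈ H n, ∀ t ∈ H (n + 1), s < t) {i j : ℕ} (hij : i < j) :
    ∀ s ∈ H i, ∀ t ∈ H j, s < t := by
  induction j, hij using Nat.le_induction with
  | base => exact hH i
  | succ j _ ih =>
    intro s hs t ht
    obtain ⟨u, hu⟩ := hne j
    exact (ih s hs u hu).trans (hH j u hu t ht)

lemma blockSeq_precedes_biUnion {H : ℕ → Finset ℕ} (hne : ∀ n, (H n).Nonempty)
    (hH : ∀ n, ∀ s ∈ H n, ∀ t ∈ H (n + 1), s < t) {g : ℕ} {G : Finset ℕ} (hg : ∀ i ∈ G, g < i) :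
    ∀ s ∈ H g, ∀ t ∈ G.biUnion H, s < t := by
  simp only [Finset.mem_biUnion]
  rintro s hs t ⟨i, hi, ht⟩
  exact blockSeq_precedes_of_lt hne hH (hg i hi) s hs t ht

inductive IndexBlocks
  | block (H : Finset ℕ)
  | undef

namespace IndexBlocks

instance : Mul IndexBlocks where
  mul
    | block H₁, block H₂ => if ∀ s ∈ H₁, ∀ t ∈ H₂, s < t then block (H₁ ∪ H₂) else undef
    | _, _ => undef

lemma block_mul_block (H₁ H₂ : Finset ℕ) :
    block H₁ * block H₂ = if ∀ s ∈ H₁, ∀ t ∈ H₂, s < t then block (H₁ ∪ H₂) else undef := rfl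

@[simp] lemma undef_mul (a : IndexBlocks) : undef * a = undef := rfl

@[simp] lemma mul_undef (a : IndexBlocks) : a * undef = undef := by cases a <;> rfl

instance : Semigroup IndexBlocks where
  mul_assoc a b c := by
    rcases a with H₁ | _ <;> rcases b with H₂ | _ <;> rcases c with H₃ | _ <;> try simp
    simp only [block_mul_block, apply_ite (· * block H₃), apply_ite (block H₁ * ·), undef_mul,
      mul_undef, Finset.mem_union, or_imp, forall_and]
    split_ifs <;> first | rw [Finset.union_assoc] | tauto

lemma precedes_of_block_mul_block_ne_undef {H₁ H₂ : Finset ℕ} (h : block H₁ * block H₂ ≠ undef) :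
    ∀ s ∈ H₁, ∀ t ∈ H₂, s < t := by
  by_contra hlt
  exact h (if_neg hlt)

lemma block_mul_block_of_precedes {H₁ H₂ : Finset ℕ} (h : ∀ s ∈ H₁, ∀ t ∈ H₂, s < t) :
    block H₁ * block H₂ = block (H₁ ∪ H₂) :=
  if_pos h

def singletons : Stream' IndexBlocks := fun n => block {n}

open Hindman

lemma exists_of_mem_FP_singletons_drop (k : ℕ) {z : IndexBlocks} (hz : z ∈ FP (singletons.drop k)) :
    ∃ H : Finset ℕ, H.Nonempty ∧ (∀ t ∈ H, k ≤ t) ∧ z = block H := by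
  generalize hs : singletons.drop k = s at hz
  induction hz generalizing k with
  | head' a =>
    subst hs
    exact ⟨{k}, Finset.singleton_nonempty k, by simp, Stream'.head_drop _ _⟩
  | tail' a m _ ih =>
    obtain ⟨H, hne, hk, rfl⟩ := ih (k + 1) (by rw [← hs, Stream'.tail_drop'])
    exact ⟨H, hne, fun t ht => (hk t ht).trans' k.le_succ, rfl⟩
  | cons' a m _ ih =>
    obtain ⟨H, hne, hk, rfl⟩ := ih (k + 1) (by rw [← hs, Stream'.tail_drop'])
    subst hs
    rw [Stream'.head_drop]
    refine ⟨insert k H, Finset.insert_nonempty k H, ?_, ?_⟩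
    · simpa using fun t ht => (hk t ht).trans' k.le_succ
    · rw [Finset.insert_eq]
      exact block_mul_block_of_precedes (by simpa [Nat.succ_le_iff] using hk)

lemma block_biUnion_mem_FP {H : ℕ → Finset ℕ} (hne : ∀ n, (H n).Nonempty)
    (hH : ∀ n, ∀ s ∈ H n, ∀ t ∈ H (n + 1), s < t) {a : Stream' IndexBlocks}
    (ha : ∀ n, a.get n = block (H n)) {G : Finset ℕ} (hG : G.Nonempty) :
    block (G.biUnion H) ∈ FP a := by
  suffices ∀ k, (∀ t ∈ G, k ≤ t) → block (G.biUnion H) ∈ FP (a.drop k) from this 0 (by simp)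
  induction G using Finset.induction_on_min with
  | empty => exact absurd hG Finset.not_nonempty_empty
  | insert g G hg ih =>
    intro k hk
    obtain ⟨d, rfl⟩ := Nat.exists_eq_add_of_le (hk g (Finset.mem_insert_self g G))
    refine FP_drop_subset_FP _ d ?_
    rw [Stream'.drop_drop, Finset.biUnion_insert]
    rcases G.eq_empty_or_nonempty with rfl | hG'
    · simpa [← ha, ← Stream'.head_drop] using FP.head (a.drop (k + d))
    · rw [← block_mul_block_of_precedes (blockSeq_precedes_biUnion hne hH hg), ← ha,
        ← Stream'.head_drop]
      refine FP.cons _ _ ?_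
      rw [Stream'.tail_drop']
      exact ih hG' _ fun t ht => hg t ht

end IndexBlocks

namespace PS

variable {S : Type*} {P : S → S → Option S}

lemma listSum_cons {l : List S} (hl : l ≠ []) (a : S) :
    listSum P (a :: l) = (listSum P l).bind (P a) := by
  cases l with
  | nil => exact absurd rfl hl
  | cons b l => rfl

lemma listSum_append (hP : Assoc P) {l₁ l₂ : List S} (h₁ : l₁ ≠ []) (h₂ : l₂ ≠ []) :
    listSum P (l₁ ++ l₂) = (listSum P l₁).bind fun s => (listSum P l₂).bind (P s) := by
  induction l₁ with
  | nil => exact absurd rfl h₁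
  | cons a l ih =>
    rcases eq_or_ne l [] with rfl | hl
    · exact listSum_cons h₂ a
    · rw [List.cons_append, listSum_cons (by simp [hl]), ih hl, listSum_cons hl]
      cases listSum P l <;> cases listSum P l₂ <;> simp [hP a]

lemma sort_union_of_precedes {H₁ H₂ : Finset ℕ} (h : ∀ s ∈ H₁, ∀ t ∈ H₂, s < t) :
    (H₁ ∪ H₂).sort (· ≤ ·) = H₁.sort (· ≤ ·) ++ H₂.sort (· ≤ ·) := by
  have hdisj : Disjoint H₁ H₂ := Finset.disjoint_left.mpr fun a h₁ h₂ => lt_irrefl a (h a h₁ a h₂)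
  refine List.Perm.eq_of_pairwise' (Finset.pairwise_sort _ _) ?_ ?_
  · rw [List.pairwise_append]
    refine ⟨Finset.pairwise_sort _ _, Finset.pairwise_sort _ _, fun a ha b hb => ?_⟩
    exact (h a ((Finset.mem_sort _).mp ha) b ((Finset.mem_sort _).mp hb)).le
  · rw [← Multiset.coe_eq_coe, ← Multiset.coe_add]
    simp only [Finset.sort_eq]
    rw [← Finset.disjUnion_eq_union H₁ H₂ hdisj]
    rfl

lemma fsum_singleton (x : ℕ → S) (n : ℕ) : fsum P x {n} = some (x n) := by
  simp [fsum, listSum]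

lemma fsum_union_of_precedes (hP : Assoc P) (x : ℕ → S) {H₁ H₂ : Finset ℕ} (h₁ : H₁.Nonempty)
    (h₂ : H₂.Nonempty) (h : ∀ s ∈ H₁, ∀ t ∈ H₂, s < t) :
    fsum P x (H₁ ∪ H₂) = (fsum P x H₁).bind fun s => (fsum P x H₂).bind (P s) := by
  rw [fsum, sort_union_of_precedes h, List.map_append]
  have sort_ne_nil {H : Finset ℕ} (hH : H.Nonempty) : (H.sort (· ≤ ·)).map x ≠ [] := by
    simpa [← List.length_pos_iff] using hH
  exact listSum_append hP (sort_ne_nil h₁) (sort_ne_nil h₂)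

lemma fsum_biUnion (hP : Assoc P) {x y : ℕ → S} {H : ℕ → Finset ℕ} (hne : ∀ n, (H n).Nonempty)
    (hH : ∀ n, ∀ s ∈ H n, ∀ t ∈ H (n + 1), s < t) (hy : ∀ n, fsum P x (H n) = some (y n))
    {G : Finset ℕ} (hG : G.Nonempty) : fsum P y G = fsum P x (G.biUnion H) := by
  induction G using Finset.induction_on_min with
  | empty => exact absurd hG Finset.not_nonempty_empty
  | insert g G hg ih =>
    rcases G.eq_empty_or_nonempty with rfl | hG'
    · simp [fsum_singleton, hy]
    · rw [Finset.biUnion_insert, Finset.insert_eq,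
        fsum_union_of_precedes hP y (Finset.singleton_nonempty g) hG' (by simpa using hg),
        fsum_union_of_precedes hP x (hne g) (hG'.biUnion fun i _ => hne i)
          (blockSeq_precedes_biUnion hne hH hg),
        fsum_singleton, hy, ih hG']

theorem exists_ultrafilter_forall_mem_exists_FSfrom_subset (hP : Assoc P) {x : ℕ → S}
    (hx : ∀ F : Finset ℕ, F.Nonempty → (fsum P x F).isSome) :
    ∃ V : Ultrafilter S, ∀ B ∈ V, ∃ y : ℕ → S, IsProdSubsysInf P x 0 y ∧ FSfrom P y 0 ⊆ B := by
  obtain ⟨U, hU, hFP⟩ := Hindman.exists_idempotent_ultrafilter_le_FP IndexBlocks.singletons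
  let blockSum : IndexBlocks → S
    | .block H => (fsum P x H).getD (x 0)
    | .undef => x 0
  refine ⟨U.map blockSum, fun B hB => ?_⟩
  obtain ⟨a, ha⟩ := Hindman.exists_FP_of_large U hU _ (Filter.inter_mem hB hFP)
  have hblock {z} (hz : z ∈ Hindman.FP a) : ∃ H : Finset ℕ, H.Nonempty ∧ z = .block H := by
    obtain ⟨H, hne, -, rfl⟩ :=
      IndexBlocks.exists_of_mem_FP_singletons_drop 0 (ha hz).2
    exact ⟨H, hne, rfl⟩
  choose H hne hH using fun n => hblock (Hindman.FP.singleton a n)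
  have hprec (n : ℕ) : ∀ s ∈ H n, ∀ t ∈ H (n + 1), s < t := by
    refine IndexBlocks.precedes_of_block_mul_block_ne_undef ?_
    obtain ⟨_, -, h⟩ := hblock (Hindman.FP.mul_two a n (n + 1) n.lt_succ_self)
    rw [← hH, ← hH, h]
    exact nofun
  choose y hy using fun n => Option.isSome_iff_exists.mp (hx (H n) (hne n))
  refine ⟨y, ⟨H, hne, fun _ _ => Nat.zero_le _, hprec, hy⟩, ?_⟩
  rintro s ⟨G, hG, -, hs⟩
  have hsum := (ha (IndexBlocks.block_biUnion_mem_FP hne hprec hH hG)).1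
  rw [fsum_biUnion hP hne hprec hy hG] at hs
  simpa [blockSum, hs] using hsum

lemma IsProdSubsysInf.isProdSubsysFin {x y : ℕ → S} {k : ℕ} (h : IsProdSubsysInf P x k y)
    (m : ℕ) : IsProdSubsysFin P x k m y :=
  let ⟨H, hne, hk, hH, hy⟩ := h
  ⟨H, fun n _ => hne n, hk, fun n _ => hH n, fun n _ => hy n⟩

lemma FSfin_subset_FSfrom (y : ℕ → S) (m : ℕ) : FSfin P y m ⊆ FSfrom P y 0 :=
  fun _ ⟨H, hne, _, hs⟩ => ⟨H, hne, fun n _ => n.zero_le, hs⟩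

lemma finite_FSfin (y : ℕ → S) (m : ℕ) : (FSfin P y m).Finite := by
  classical
  refine ((Finset.range m).powerset.biUnion fun H => (fsum P y H).toFinset).finite_toSet.subset ?_
  rintro s ⟨H, -, hH, hs⟩
  exact Finset.mem_coe.mpr
    (Finset.mem_biUnion.mpr ⟨H, Finset.mem_powerset.mpr hH, Option.mem_toFinset.mpr hs⟩)

end PS

namespace Ultrafilter

variable {ι : Type*} [DecidableEq ι] {S : ι → Type*} (V : ∀ i, Ultrafilter (S i)) (x₀ : ∀ i, S i)

/-- `iterPi V x₀ [k₁, …, kₙ]` is the iterated product `V k₁ ⊗ ⋯ ⊗ V kₙ`, realised on the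
functions that agree with `x₀` outside `{k₁, …, kₙ}`. -/
noncomputable def iterPi : List ι → Ultrafilter (∀ i, S i)
  | [] => pure x₀
  | k :: L => (V k).bind fun a => (iterPi L).map (Function.update · k a)

variable {V x₀}

lemma mem_iterPi_cons {A : Set (∀ i, S i)} {k : ι} {L : List ι} :
    A ∈ iterPi V x₀ (k :: L) ↔ {a | (Function.update · k a) ⁻¹' A ∈ iterPi V x₀ L} ∈ V k :=
  Iff.rfl

theorem exists_box_subset_of_mem_iterPi (𝒢 : ∀ i, Set (Set (S i)))
    (hV : ∀ i, ∀ B ∈ V i, ∃ G ∈ 𝒢 i, G ⊆ B) {L : List ι} {k : ι} (hL : (L ++ [k]).Nodup)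
    (hfin : ∀ i ∈ L, ∀ G ∈ 𝒢 i, G.Finite) {A : Set (∀ i, S i)}
    (hA : A ∈ iterPi V x₀ (L ++ [k])) :
    ∃ G : ∀ i, Set (S i), (∀ i ∈ L ++ [k], G i ∈ 𝒢 i) ∧
      ∀ f : ∀ i, S i, (∀ i ∈ L ++ [k], f i ∈ G i) → (∀ i ∉ L ++ [k], f i = x₀ i) → f ∈ A := by
  induction L generalizing A with
  | nil =>
    obtain ⟨Gk, hGk, hGkA⟩ := hV k _ (mem_iterPi_cons.mp hA)
    refine ⟨Function.update (fun _ => Set.univ) k Gk, by simpa using hGk, fun f hf hx₀ => ?_⟩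
    have hfx₀ : f = Function.update x₀ k (f k) := by
      funext i
      rcases eq_or_ne i k with rfl | hik
      · simp
      · simp [hik, hx₀ i (by simpa using hik)]
    rw [hfx₀]
    exact hGkA (by simpa using hf k)
  | cons j L ih =>
    rw [List.cons_append, List.nodup_cons] at hL
    obtain ⟨Gj, hGj, hGjA⟩ := hV j _ (mem_iterPi_cons.mp hA)
    have hA' : (⋂ a ∈ Gj, (Function.update · j a) ⁻¹' A) ∈ iterPi V x₀ (L ++ [k]) :=
      (Filter.biInter_mem (hfin j (by simp) Gj hGj)).mpr hGjA
    obtain ⟨G, hG, hGA⟩ := ih hL.2 (fun i hi => hfin i (by simp [hi])) hA'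
    refine ⟨Function.update G j Gj, ?_, fun f hf hx₀ => ?_⟩
    · intro i hi
      rcases eq_or_ne i j with rfl | hij
      · simpa using hGj
      · rw [Function.update_of_ne hij]
        exact hG i (by simpa [hij] using hi)
    · have hupdate : Function.update f j (x₀ j) ∈ ⋂ a ∈ Gj, (Function.update · j a) ⁻¹' A := by
        refine hGA _ (fun i hi => ?_) (fun i hi => ?_)
        · have hij : i ≠ j := fun h => hL.1 (h ▸ hi)
          simpa [hij] using hf i (by simp [hi])
        · rcases eq_or_ne i j with rfl | hij
          · simp
          · simpa [hij] using hx₀ i (by simp [hij, hi])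
      simpa using Set.mem_iInter₂.mp hupdate (f j) (by simpa using hf j (by simp))

theorem exists_pi_subset_of_iUnion_eq_univ [Fintype ι] (𝒢 : ∀ i, Set (Set (S i)))
    (hV : ∀ i, ∀ B ∈ V i, ∃ G ∈ 𝒢 i, G ⊆ B) (k : ι) (hfin : ∀ i ≠ k, ∀ G ∈ 𝒢 i, G.Finite)
    {κ : Type*} [Finite κ] (D : κ → Set (∀ i, S i)) (hD : ⋃ j, D j = Set.univ) :
    ∃ j, ∃ G : ∀ i, Set (S i), (∀ i, G i ∈ 𝒢 i) ∧ Set.univ.pi G ⊆ D j := by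
  let x₀ (i : ι) : S i := (nonempty_of_mem (V i).univ_mem).some
  set L := (Finset.univ.erase k).toList
  have hmem (i : ι) : i ∈ L ++ [k] := by
    by_cases hi : i = k <;> simp [L, hi]
  have hL : (L ++ [k]).Nodup := by
    simp [L, List.nodup_append, Finset.nodup_toList]
  obtain ⟨j, hj⟩ : ∃ j, D j ∈ iterPi V x₀ (L ++ [k]) :=
    eventually_exists_iff.mp (.of_forall fun f => Set.mem_iUnion.mp (hD ▸ Set.mem_univ f))
  obtain ⟨G, hG, hGD⟩ :=
    exists_box_subset_of_mem_iterPi 𝒢 hV hL (fun i hi => hfin i (by simpa [L] using hi)) hj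
  exact ⟨j, G, fun i => hG i (hmem i),
    fun f hf => hGD f (fun i _ => hf i (Set.mem_univ i)) fun i hi => absurd (hmem i) hi⟩

end Ultrafilter

theorem statement3_general {l : ℕ} (hl : 2 ≤ l) {S : Fin l → Type*}
    (P : ∀ i, S i → S i → Option (S i))
    (hassoc : ∀ i, PS.Assoc (P i))
    (x : ∀ i, ℕ → S i) (hx : ∀ i, PS.AdequateSeq (P i) (x i))
    (m r : ℕ) (D : Fin r → Set (∀ i, S i)) (hD : (⋃ j, D j) = Set.univ) :
    ∃ j : Fin r, ∃ y : ∀ i, ℕ → S i,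
      (∀ i : Fin l, (i : ℕ) < l - 1 → PS.IsProdSubsysFin (P i) (x i) 0 m (y i)) ∧
      PS.IsProdSubsysInf (P ⟨l - 1, Nat.sub_lt (Nat.lt_of_lt_of_le Nat.zero_lt_two hl) Nat.one_pos⟩) (x ⟨l - 1, Nat.sub_lt (Nat.lt_of_lt_of_le Nat.zero_lt_two hl) Nat.one_pos⟩) 0
        (y ⟨l - 1, Nat.sub_lt (Nat.lt_of_lt_of_le Nat.zero_lt_two hl) Nat.one_pos⟩) ∧
      {f : ∀ i, S i |
          (∀ i : Fin l, (i : ℕ) < l - 1 → f i ∈ PS.FSfin (P i) (y i) m) ∧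
          f ⟨l - 1, Nat.sub_lt (Nat.lt_of_lt_of_le Nat.zero_lt_two hl) Nat.one_pos⟩ ∈
            PS.FSfrom (P ⟨l - 1, Nat.sub_lt (Nat.lt_of_lt_of_le Nat.zero_lt_two hl) Nat.one_pos⟩) (y ⟨l - 1, Nat.sub_lt (Nat.lt_of_lt_of_le Nat.zero_lt_two hl) Nat.one_pos⟩) 0} ⊆ D j := by
  set last : Fin l := ⟨l - 1, Nat.sub_lt (Nat.lt_of_lt_of_le Nat.zero_lt_two hl) Nat.one_pos⟩
  choose V hV using fun i =>
    PS.exists_ultrafilter_forall_mem_exists_FSfrom_subset (hassoc i) (hx i).1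
  let 𝒢 (i : Fin l) : Set (Set (S i)) := {G | ∃ y, PS.IsProdSubsysInf (P i) (x i) 0 y ∧
    G = if i = last then PS.FSfrom (P i) y 0 else PS.FSfin (P i) y m}
  have h𝒢 (i : Fin l) (B : Set (S i)) (hB : B ∈ V i) : ∃ G ∈ 𝒢 i, G ⊆ B := by
    obtain ⟨y, hy, hyB⟩ := hV i B hB
    refine ⟨_, ⟨y, hy, rfl⟩, ?_⟩
    split_ifs
    exacts [hyB, (PS.FSfin_subset_FSfrom y m).trans hyB]
  have hfin (i : Fin l) (hi : i ≠ last) : ∀ G ∈ 𝒢 i, G.Finite := by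
    rintro _ ⟨y, -, rfl⟩
    rw [if_neg hi]
    exact PS.finite_FSfin y m
  obtain ⟨j, G, hG, hGD⟩ := Ultrafilter.exists_pi_subset_of_iUnion_eq_univ 𝒢 h𝒢 last hfin D hD
  choose y hy hGy using hG
  refine ⟨j, y, fun i _ => (hy i).isProdSubsysFin m, hy last, fun f ⟨hf, hflast⟩ => ?_⟩
  refine hGD fun i _ => ?_
  rw [hGy i]
  split_ifs with hi
  · exact hi ▸ hflast
  · exact hf i (by simp only [last, Fin.ext_iff] at hi; omega)

/-- If `S_1 × ⋯ × S_l = D_1 ∪ ⋯ ∪ D_r` (with `l ≥ 2`), then some `D_j`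
contains a product `FS(⟨y_{1,n}⟩_{n=1}^m) × ⋯ × FS(⟨y_{l-1,n}⟩_{n=1}^m) × FS(⟨y_{l,n}⟩_{n=1}^∞)`
where each `⟨y_{i,n}⟩_{n=1}^m` (for `i < l`) is a product subsystem of
`FS(⟨x_{i,n}⟩_{n=1}^∞)` and `⟨y_{l,n}⟩_{n=1}^∞` is an infinite product subsystem of
`FS(⟨x_{l,n}⟩_{n=1}^∞)`. -/
theorem statement3 {l : ℕ} (hl : 2 ≤ l) {S : Fin l → Type*} [∀ i, Countable (S i)]
    (P : ∀ i, S i → S i → Option (S i))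
    (hassoc : ∀ i, PS.Assoc (P i)) (hcomm : ∀ i, PS.Comm (P i))
    (hadeq : ∀ i, PS.Adequate (P i))
    (x : ∀ i, ℕ → S i) (hx : ∀ i, PS.AdequateSeq (P i) (x i))
    (m r : ℕ) (D : Fin r → Set (∀ i, S i)) (hD : (⋃ j, D j) = Set.univ) :
    ∃ j : Fin r, ∃ y : ∀ i, ℕ → S i,
      (∀ i : Fin l, (i : ℕ) < l - 1 → PS.IsProdSubsysFin (P i) (x i) 0 m (y i)) ∧
      PS.IsProdSubsysInf (P ⟨l - 1, Nat.sub_lt (Nat.lt_of_lt_of_le Nat.zero_lt_two hl) Nat.one_pos⟩) (x ⟨l - 1, Nat.sub_lt (Nat.lt_of_lt_of_le Nat.zero_lt_two hl) Nat.one_pos⟩) 0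
        (y ⟨l - 1, Nat.sub_lt (Nat.lt_of_lt_of_le Nat.zero_lt_two hl) Nat.one_pos⟩) ∧
      {f : ∀ i, S i |
          (∀ i : Fin l, (i : ℕ) < l - 1 → f i ∈ PS.FSfin (P i) (y i) m) ∧
          f ⟨l - 1, Nat.sub_lt (Nat.lt_of_lt_of_le Nat.zero_lt_two hl) Nat.one_pos⟩ ∈
            PS.FSfrom (P ⟨l - 1, Nat.sub_lt (Nat.lt_of_lt_of_le Nat.zero_lt_two hl) Nat.one_pos⟩) (y ⟨l - 1, Nat.sub_lt (Nat.lt_of_lt_of_le Nat.zero_lt_two hl) Nat.one_pos⟩) 0} ⊆ D j :=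
  statement3_general hl P hassoc x hx m r D hD
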